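/- Every chordal graph with no infinite clique admits a tree-decomposition all of whose parts are maximal cliques. -/

import Mathlib

open SimpleGraph

variable {V W : Type*}

/-- `G` contains no induced cycle of length at least four. -/
def IsChordal (G : SimpleGraph V) : Prop :=
  ∀ (n : ℕ), 4 ≤ n → ∀ f : ZMod n → V, Function.Injective f →
    (∀ i j : ZMod n, G.Adj (f i) (f j) ↔ j = i + 1 ∨ i = j + 1) → False

/-- The set of vertices outside `C` having a neighbour in `C`. -/
def nbhdSet (G : SimpleGraph V) (C : Set V) : Set V :=
  {v | v ∉ C ∧ ∃ u ∈ C, G.Adj u v}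

/-- `C` is a connected component of `G - S`. -/
def IsCompOutside (G : SimpleGraph V) (S C : Set V) : Prop :=
  C.Nonempty ∧ Disjoint C S ∧ (G.induce C).Connected ∧
    ∀ u ∈ C, ∀ v, G.Adj u v → v ∉ S → v ∈ C

/-- A strict comb of cliques. -/
def HasStrictCombOfCliques (G : SimpleGraph V) : Prop :=
  ∃ v : ℕ → V, Function.Injective v ∧ (∀ i j, i ≠ j → G.Adj (v i) (v j)) ∧
    ∀ i : ℕ, 0 < i → ∃ w, (∀ j, j < i → G.Adj w (v j)) ∧ (∀ j, i ≤ j → ¬ G.Adj w (v j))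

/-- Every walk from `A` to `B` meets `S`. -/
def Separates (G : SimpleGraph V) (A B S : Set V) : Prop :=
  ∀ a ∈ A, ∀ b ∈ B, ∀ p : G.Walk a b, ∃ x ∈ p.support, x ∈ S

/-- `S` is a minimal `A`–`B` separator. -/
def IsMinimalSeparator (G : SimpleGraph V) (A B S : Set V) : Prop :=
  Separates G A B S ∧ ∀ S' ⊆ S, Separates G A B S' → S' = S

/-- `S` is a minimal `a`–`b` separator (containing neither `a` nor `b`). -/
def IsMinimalVxSeparator (G : SimpleGraph V) (a b : V) (S : Set V) : Prop :=
  a ∉ S ∧ b ∉ S ∧ Separates G {a} {b} S ∧ ∀ S' ⊆ S, Separates G {a} {b} S' → S' = S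

/-- A tree-decomposition of `G` with decomposition tree `T` and bags `bag`. -/
def IsTreeDecomp {ι : Type*} (G : SimpleGraph V) (T : SimpleGraph ι) (bag : ι → Set V) : Prop :=
  T.IsTree ∧ (∀ v, ∃ t, v ∈ bag t) ∧
    (∀ u v, G.Adj u v → ∃ t, u ∈ bag t ∧ v ∈ bag t) ∧
    ∀ v, (T.induce {t | v ∈ bag t}).Connected

/-- `H` is an induced minor of `G`. -/
def IsInducedMinor (H : SimpleGraph W) (G : SimpleGraph V) : Prop :=
  ∃ B : W → Set V, (∀ w, (B w).Nonempty) ∧ (∀ w, (G.induce (B w)).Connected) ∧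
    (Pairwise fun u w => Disjoint (B u) (B w)) ∧
    ∀ u w, u ≠ w → ((∃ x ∈ B u, ∃ y ∈ B w, G.Adj x y) ↔ H.Adj u w)

/-- The graph `𝓗`: a countably infinite clique together with two non-adjacent
dominating vertices. -/
def HGraph : SimpleGraph (ℕ ⊕ Bool) where
  Adj x y := match x, y with
    | .inl i, .inl j => i ≠ j
    | .inl _, .inr _ => True
    | .inr _, .inl _ => True
    | .inr _, .inr _ => False
  symm := by
    constructor
    rintro (i | a) (j | b) h <;> simp_all
    exact fun h' => h h'.symm
  loopless := by
    constructor
    rintro (i | a) h <;> simp_all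

/-- `u` lies on the path from `r` to `v` in the tree `T`; this is the tree-order. -/
def TreeLE (T : SimpleGraph V) (r u v : V) : Prop :=
  ∀ p : T.Walk r v, p.IsPath → u ∈ p.support

/-- `T` is a normal spanning tree of `G` with root `r`. -/
def IsNormalSpanningTree (G T : SimpleGraph V) (r : V) : Prop :=
  T ≤ G ∧ T.IsTree ∧ ∀ u v, G.Adj u v → TreeLE T r u v ∨ TreeLE T r v u

universe u

/-!
Grow a tree of maximal cliques by Zorn's lemma. A partial decomposition keeps, besides the
tree-decomposition axioms on the vertices `U` it covers, the invariant that for every connected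
`W` avoiding `U` the neighbours of `W` in `U` lie in a single bag. If a vertex is uncovered, its
component `C` of `G - U` then has a neighbourhood `S` which is a clique inside some bag `L`; `S` is
finite, so chordality yields a vertex of `C` adjacent to all of `S`, and a maximal clique
`K ⊆ C ∪ S` through it can be hung below `L`. Along a chain the invariant survives because the
relevant neighbourhood is again a clique, hence finite, hence already covered at some stage.
-/

open Function

variable {G : SimpleGraph V}

def IsInducedPath (G : SimpleGraph V) (g : ℕ → V) (n : ℕ) : Prop :=
  Set.InjOn g (Set.Iic n) ∧ ∀ i j, i < j → j ≤ n → (G.Adj (g i) (g j) ↔ j = i + 1)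

lemma Set.InjOn.update_succ {g : ℕ → V} {n : ℕ} (hg : Set.InjOn g (Set.Iic n)) {a : V}
    (ha : ∀ i ≤ n, a ≠ g i) : Set.InjOn (update g (n + 1) a) (Set.Iic (n + 1)) := by
  intro i hi j hj h
  simp only [Set.mem_Iic] at hi hj
  rcases eq_or_ne i (n + 1) with rfl | hin <;> rcases eq_or_ne j (n + 1) with rfl | hjn
  · rfl
  · rw [update_self, update_of_ne hjn] at h
    exact absurd h (ha _ (by omega))
  · rw [update_self, update_of_ne hin] at h
    exact absurd h.symm (ha _ (by omega))
  · rw [update_of_ne hin, update_of_ne hjn] at h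
    exact hg (Set.mem_Iic.2 (by omega)) (Set.mem_Iic.2 (by omega)) h

namespace IsInducedPath

variable {g : ℕ → V} {n : ℕ}

lemma adj_iff (hg : IsInducedPath G g n) {i j : ℕ} (hi : i ≤ n) (hj : j ≤ n) :
    G.Adj (g i) (g j) ↔ j = i + 1 ∨ i = j + 1 := by
  rcases lt_trichotomy i j with h | rfl | h
  · rw [hg.2 i j h hj]; omega
  · simp
  · rw [G.adj_comm, hg.2 j i h hi]; omega

lemma drop (hg : IsInducedPath G g n) {m : ℕ} (hm : m ≤ n) :
    IsInducedPath G (fun i => g (m + i)) (n - m) :=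
  ⟨fun i hi j hj h => by
      have := hg.1 (Set.mem_Iic.2 (by have := Set.mem_Iic.1 hi; omega))
        (Set.mem_Iic.2 (by have := Set.mem_Iic.1 hj; omega)) h
      omega,
    fun i j hij hj => by rw [hg.2 _ _ (by omega) (by omega)]; omega⟩

lemma snoc (hg : IsInducedPath G g n) {a : V} (ha : ∀ i ≤ n, a ≠ g i)
    (hadj : ∀ i ≤ n, G.Adj (g i) a ↔ i = n) : IsInducedPath G (update g (n + 1) a) (n + 1) := by
  refine ⟨hg.1.update_succ ha, fun i j hij hj => ?_⟩
  rw [update_of_ne (by omega : i ≠ n + 1)]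
  rcases eq_or_ne j (n + 1) with rfl | hjn
  · rw [update_self, hadj i (by omega)]; omega
  · rw [update_of_ne hjn, hg.2 i j hij (by omega)]

lemma map {H : SimpleGraph W} (f : H ↪g G) {g : ℕ → W} (hg : IsInducedPath H g n) :
    IsInducedPath G (f ∘ g) n :=
  ⟨f.injective.comp_injOn hg.1, fun i j hij hj => by simpa using hg.2 i j hij hj⟩

end IsInducedPath

lemma ZMod.eq_add_one_iff_val {n : ℕ} (i j : ZMod (n + 1)) :
    j = i + 1 ↔ j.val = i.val + 1 ∨ (i.val = n ∧ j.val = 0) := by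
  have hi := ZMod.val_lt i
  have hj := ZMod.val_lt j
  rw [← ZMod.val_injective _ |>.eq_iff, ZMod.val_add, ZMod.val_one_eq_one_mod]
  rcases Nat.lt_or_ge n 1 with hn | hn
  · obtain rfl : n = 0 := by omega
    simp only [zero_add, Nat.mod_one]
    omega
  · rw [Nat.one_mod_eq_one.2 (by omega)]
    rcases eq_or_ne i.val n with hin | hin
    · rw [hin, Nat.mod_self]; omega
    · rw [Nat.mod_eq_of_lt (by omega)]; omega

theorem IsChordal.exists_adj_of_isInducedPath (hG : IsChordal G) {g : ℕ → V} {n : ℕ}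
    (hg : IsInducedPath G g n) (hn : 2 ≤ n) {c : V} (hc : ∀ i ≤ n, c ≠ g i)
    (h0 : G.Adj c (g 0)) (hn' : G.Adj c (g n)) : ∃ i, 0 < i ∧ i < n ∧ G.Adj c (g i) := by
  by_contra! hchord
  have hcg : ∀ i ≤ n, G.Adj c (g i) ↔ i = 0 ∨ i = n := fun i hi => by
    refine ⟨fun h => ?_, by rintro (rfl | rfl) <;> assumption⟩
    by_contra! hi'
    exact hchord i (by omega) (by omega) h
  -- Otherwise `g 0, …, g n, c` is an induced cycle of length `n + 2 ≥ 4`, indexed by `ZMod`.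
  have hf : ∀ a b, a ≤ n + 1 → b ≤ n + 1 → (G.Adj (update g (n + 1) c a) (update g (n + 1) c b) ↔
      b = a + 1 ∨ a = b + 1 ∨ (a = 0 ∧ b = n + 1) ∨ (a = n + 1 ∧ b = 0)) := by
    intro a b ha hb
    rcases eq_or_ne a (n + 1) with rfl | han <;> rcases eq_or_ne b (n + 1) with rfl | hbn
    · simp only [update_self, SimpleGraph.irrefl, false_iff]; omega
    · rw [update_self, update_of_ne hbn, hcg _ (by omega)]; omega
    · rw [update_self, update_of_ne han, G.adj_comm, hcg _ (by omega)]; omega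
    · rw [update_of_ne han, update_of_ne hbn, hg.adj_iff (by omega) (by omega)]; omega
  refine hG (n + 2) (by omega) (fun i => update g (n + 1) c i.val)
    (fun i j h => ZMod.val_injective _ <| hg.1.update_succ hc
      (Set.mem_Iic.2 (Nat.lt_succ_iff.1 i.val_lt)) (Set.mem_Iic.2 (Nat.lt_succ_iff.1 j.val_lt)) h)
    fun i j => ?_
  have := i.val_lt; have := j.val_lt
  rw [hf _ _ (by omega) (by omega), ZMod.eq_add_one_iff_val, ZMod.eq_add_one_iff_val]
  omega

theorem IsChordal.adj_of_isInducedPath (hG : IsChordal G) {g : ℕ → V} {n : ℕ}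
    (hg : IsInducedPath G g n) {a b : V} (hab : G.Adj a b) (ha : ∀ i ≤ n, a ≠ g i)
    (hb : ∀ i ≤ n, b ≠ g i) (hag : ∀ i ≤ n, G.Adj (g i) a ↔ i = n) (hbg : G.Adj b (g 0)) :
    G.Adj b (g n) := by
  classical
  by_contra hbn
  obtain ⟨m, hmn, hm, hgt⟩ : ∃ m < n, G.Adj b (g m) ∧ ∀ i, m < i → i ≤ n → ¬ G.Adj b (g i) :=
    have hlast := Nat.findGreatest_spec (P := fun i => G.Adj b (g i)) (Nat.zero_le n) hbg
    ⟨_, lt_of_le_of_ne (Nat.findGreatest_le n) fun h => hbn (h ▸ hlast), hlast,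
      fun i h1 h2 => Nat.findGreatest_is_greatest h1 h2⟩
  -- `b` is adjacent to exactly the two ends of the induced path `g m, …, g n, a`.
  have hpath := (hg.drop hmn.le).snoc (fun i _ => ha _ (by omega))
    fun i hi => by rw [hag _ (by omega)]; omega
  obtain ⟨i, hi0, hin, hi⟩ := hG.exists_adj_of_isInducedPath hpath (by omega)
    (fun i hi => by
      rcases eq_or_ne i (n - m + 1) with rfl | hin
      · simpa using hab.ne'
      · simpa [hin] using hb _ (by omega))
    (by simpa [update_of_ne (by omega : 0 ≠ n - m + 1)] using hm) (by simpa using hab.symm)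
  rw [update_of_ne hin.ne] at hi
  exact hgt _ (by omega) (by omega) hi

section ShortestWalk

variable {u x : V} {X : Set V}

lemma exists_walk_forall_length_le (h : ∃ x ∈ X, G.Reachable u x) :
    ∃ x ∈ X, ∃ p : G.Walk u x, ∀ y ∈ X, ∀ q : G.Walk u y, p.length ≤ q.length := by
  classical
  have hex : ∃ n, ∃ x ∈ X, ∃ p : G.Walk u x, p.length = n := by
    obtain ⟨x, hx, ⟨p⟩⟩ := h
    exact ⟨_, x, hx, p, rfl⟩
  obtain ⟨x, hx, p, hp⟩ := Nat.find_spec hex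
  exact ⟨x, hx, p, fun y hy q => hp ▸ Nat.find_min' hex ⟨y, hy, q, rfl⟩⟩

variable {p : G.Walk u x} (hmin : ∀ y ∈ X, ∀ q : G.Walk u y, p.length ≤ q.length)
include hmin

lemma getVert_notMem_of_forall_length_le {i : ℕ} (hi : i < p.length) : p.getVert i ∉ X :=
  fun hX => by simpa [hi.le] using (hmin _ hX (p.take i)).trans_lt' hi

lemma isInducedPath_getVert_of_forall_length_le (hx : x ∈ X) :
    IsInducedPath G p.getVert p.length := by
  classical
  refine ⟨?_, fun i j hij hj => ⟨fun h => ?_, fun h => h ▸ p.adj_getVert_succ (by omega)⟩⟩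
  · exact (p.bypass_eq_self_of_length_le_length_bypass (hmin x hx p.bypass) ▸
      p.bypass_isPath).getVert_injOn
  · by_contra hji
    have := hmin x hx (((p.take i).concat h).append (p.drop j))
    simp only [Walk.length_append, Walk.length_concat, Walk.take_length, Walk.drop_length] at this
    omega

end ShortestWalk

theorem IsChordal.exists_forall_adj_of_subset_nbhdSet (hG : IsChordal G) {C S : Set V}
    (hC : (G.induce C).Connected) (hS : S.Finite) (hSc : G.IsClique S)
    (hSC : S ⊆ nbhdSet G C) : ∃ u ∈ C, ∀ a ∈ S, G.Adj u a := by
  induction S, hS using Set.Finite.induction_on with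
  | empty =>
    obtain ⟨⟨u, hu⟩⟩ := hC.nonempty
    exact ⟨u, hu, by simp⟩
  | @insert a S haS hS ih =>
    obtain ⟨u, hu, huS⟩ := ih (hSc.subset (Set.subset_insert a S))
      ((Set.subset_insert a S).trans hSC)
    -- The far end of a shortest path in `C` from `u` to a neighbour of `a` is adjacent to all of
    -- `insert a S`.
    obtain ⟨haC, w, hw, hwa⟩ := hSC (Set.mem_insert a S)
    obtain ⟨x, hxa, p, hmin⟩ := exists_walk_forall_length_le (G := G.induce C)
      (X := {x | G.Adj a x}) ⟨⟨w, hw⟩, hwa.symm, hC.preconnected ⟨u, hu⟩ _⟩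
    have hpath := (isInducedPath_getVert_of_forall_length_le hmin hxa).map (Embedding.induce C)
    refine ⟨x, x.2, Set.forall_mem_insert.2 ⟨hxa.symm, fun b hb => ?_⟩⟩
    have hbC : b ∉ C := (hSC (Set.mem_insert_of_mem a hb)).1
    have hxn : p.getVert p.length = x := p.getVert_length
    have hab : G.Adj a b :=
      hSc (Set.mem_insert a S) (Set.mem_insert_of_mem a hb) (ne_of_mem_of_not_mem hb haS).symm
    refine hxn ▸ (hG.adj_of_isInducedPath hpath hab (fun i _ h => haC (h ▸ (p.getVert i).2))
      (fun i _ h => hbC (h ▸ (p.getVert i).2)) (fun i hi => ⟨fun h => ?_, ?_⟩) ?_).symm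
    · by_contra hin
      exact getVert_notMem_of_forall_length_le hmin (lt_of_le_of_ne hi hin) h.symm
    · rintro rfl
      simpa [hxn] using hxa.symm
    · simpa using (huS b hb).symm

section ParentForest

variable {ι : Type*} {π : ι → ι} {r : ι} {d : ι → ℕ}

variable (π) in
def parentGraph : SimpleGraph ι := SimpleGraph.fromRel fun a b => π a = b

lemma parentGraph_adj {a b : ι} : (parentGraph π).Adj a b ↔ a ≠ b ∧ (π a = b ∨ π b = a) :=
  fromRel_adj _ _ _

lemma exists_reachable_induce_of_depth_lt (hd : ∀ a, a ≠ r → d (π a) < d a) (A : Set ι)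
    {a : ι} (ha : a ∈ A) :
    ∃ t, ∃ ht : t ∈ A, (t = r ∨ π t ∉ A) ∧
      ((parentGraph π).induce A).Reachable ⟨a, ha⟩ ⟨t, ht⟩ := by
  induction hn : d a using Nat.strong_induction_on generalizing a with
  | _ n ih =>
    by_cases htop : a = r ∨ π a ∉ A
    · exact ⟨a, ha, htop, .rfl⟩
    rw [not_or, not_not] at htop
    have hlt := hd a htop.1
    obtain ⟨t, ht, httop, hreach⟩ := ih _ (hn ▸ hlt) htop.2 rfl
    have hadj : ((parentGraph π).induce A).Adj ⟨a, ha⟩ ⟨π a, htop.2⟩ :=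
      parentGraph_adj.2 ⟨fun h => hlt.ne (congrArg d h).symm, Or.inl rfl⟩
    exact ⟨t, ht, httop, hadj.reachable.trans hreach⟩

lemma induce_connected_of_depth_lt (hd : ∀ a, a ≠ r → d (π a) < d a) {A : Set ι}
    (hA : A.Nonempty) (htop : ∀ s ∈ A, ∀ t ∈ A, (s = r ∨ π s ∉ A) → (t = r ∨ π t ∉ A) → s = t) :
    ((parentGraph π).induce A).Connected := by
  obtain ⟨a, ha⟩ := hA
  obtain ⟨t, ht, httop, -⟩ := exists_reachable_induce_of_depth_lt hd A ha
  refine (connected_iff_exists_forall_reachable _).2 ⟨⟨t, ht⟩, fun ⟨b, hb⟩ => ?_⟩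
  obtain ⟨t', ht', ht'top, hreach⟩ := exists_reachable_induce_of_depth_lt hd A hb
  obtain rfl := htop t ht t' ht' httop ht'top
  exact hreach.symm

lemma isAcyclic_of_depth_lt (hπr : π r = r) (hd : ∀ a, a ≠ r → d (π a) < d a) :
    (parentGraph π).IsAcyclic := by
  classical
  intro v c hc
  obtain ⟨x, hx, hmax⟩ := c.support.toFinset.exists_max_image d ⟨v, by simp⟩
  rw [List.mem_toFinset] at hx
  have hc' := hc.rotate hx
  -- At a vertex of maximal depth on the cycle, both cycle neighbours are its parent.
  have hparent : ∀ y ∈ c.support, (parentGraph π).Adj x y → π x = y := by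
    intro y hy hxy
    rcases (parentGraph_adj.1 hxy).2 with h | h
    · exact h
    · have hyr : y ≠ r := by rintro rfl; exact hxy.ne (h ▸ hπr)
      exact absurd (hmax y (List.mem_toFinset.2 hy)) (not_le.2 (h ▸ hd y hyr))
  refine hc'.snd_ne_penultimate ((hparent _ ?_ (Walk.adj_snd hc'.not_nil)).symm.trans
    (hparent _ ?_ (Walk.adj_penultimate hc'.not_nil).symm))
  · exact (c.mem_support_rotate_iff x hx).1 (Walk.getVert_mem_support _ _)
  · exact (c.mem_support_rotate_iff x hx).1 (Walk.getVert_mem_support _ _)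

lemma isTree_of_depth_lt (hπr : π r = r) (hd : ∀ a, a ≠ r → d (π a) < d a) :
    (parentGraph π).IsTree := by
  refine ⟨(connected_iff_exists_forall_reachable _).2 ⟨r, fun a => ?_⟩,
    isAcyclic_of_depth_lt hπr hd⟩
  obtain ⟨t, _, htop, hreach⟩ := exists_reachable_induce_of_depth_lt hd Set.univ (Set.mem_univ a)
  obtain rfl : t = r := htop.resolve_right (· (Set.mem_univ _))
  exact (hreach.map (Embedding.induce _).toHom).symm

end ParentForest

lemma SimpleGraph.IsClique.subset_union_nbhdSet {K C : Set V} (hK : G.IsClique K)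
    (hKC : (K ∩ C).Nonempty) : K ⊆ C ∪ nbhdSet G C := by
  obtain ⟨u, huK, huC⟩ := hKC
  intro x hx
  by_cases hxC : x ∈ C
  · exact Or.inl hxC
  · exact Or.inr ⟨hxC, u, huC, hK huK hx fun h => hxC (h ▸ huC)⟩

lemma exists_maximal_isClique_superset (G : SimpleGraph V) {s : Set V} (hs : G.IsClique s) :
    ∃ K, s ⊆ K ∧ Maximal G.IsClique K :=
  zorn_subset_nonempty {t | G.IsClique t} (fun c hc hchain _ => ⟨⋃₀ c,
    (isClique_sUnion hchain.directedOn).2 hc, fun _ => Set.subset_sUnion_of_mem⟩) s hs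

section Components

variable {S C K : Set V}

lemma IsCompOutside.nbhdSet_subset (hC : IsCompOutside G S C) : nbhdSet G C ⊆ S :=
  fun x ⟨hxC, u, hu, hux⟩ => by_contra fun hxS => hxC (hC.2.2.2 u hu x hux hxS)

lemma IsCompOutside.subset_of_connected (hC : IsCompOutside G S C) {W : Set V}
    (hW : (G.induce W).Connected) (hWS : Disjoint W S) (hWC : (W ∩ C).Nonempty) : W ⊆ C := by
  suffices h : ∀ (x y : W), (G.induce W).Walk x y → (x : V) ∈ C → (y : V) ∈ C by
    obtain ⟨w₀, hw₀W, hw₀C⟩ := hWC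
    exact fun w hw => h _ ⟨w, hw⟩ (hW.preconnected ⟨w₀, hw₀W⟩ ⟨w, hw⟩).some hw₀C
  intro x y p
  induction p with
  | nil => exact id
  | @cons x y z hxy _ ih =>
    exact fun hx => ih (hC.2.2.2 x hx y hxy (Set.disjoint_left.1 hWS y.2))

lemma exists_isCompOutside {v : V} (hv : v ∉ S) : ∃ C, v ∈ C ∧ IsCompOutside G S C := by
  classical
  set C := {w | ∃ p : G.Walk v w, ∀ z ∈ p.support, z ∉ S}
  have hvC : v ∈ C := ⟨.nil, by simpa⟩
  have hsupp : ∀ {w} (p : G.Walk v w), (∀ z ∈ p.support, z ∉ S) → ∀ z ∈ p.support, z ∈ C :=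
    fun p hp z hz => ⟨p.takeUntil z hz, fun y hy => hp y (p.support_takeUntil_subset_support hz hy)⟩
  refine ⟨C, hvC, ⟨v, hvC⟩, Set.disjoint_left.2 fun w ⟨p, hp⟩ => hp w p.end_mem_support, ?_, ?_⟩
  · refine (connected_iff_exists_forall_reachable _).2 ⟨⟨v, hvC⟩, fun ⟨w, p, hp⟩ => ?_⟩
    exact ⟨p.induce C (hsupp p hp)⟩
  · rintro u ⟨p, hp⟩ w huw hwS
    refine ⟨p.concat huw, fun z hz => ?_⟩
    rw [Walk.support_concat, List.mem_append, List.mem_singleton] at hz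
    exact hz.elim (hp z) (· ▸ hwS)

lemma IsCompOutside.mem_of_isClique (hC : IsCompOutside G S C) (hK : G.IsClique K)
    (hKC : (K ∩ C).Nonempty) {x : V} (hxK : x ∈ K) (hxS : x ∉ S) : x ∈ C :=
  (hK.subset_union_nbhdSet hKC hxK).resolve_right fun hx => hxS (hC.nbhdSet_subset hx)

lemma IsCompOutside.mem_nbhdSet_of_isClique (hC : IsCompOutside G S C) (hK : G.IsClique K)
    (hKC : (K ∩ C).Nonempty) {x : V} (hxK : x ∈ K) (hxS : x ∈ S) : x ∈ nbhdSet G C :=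
  (hK.subset_union_nbhdSet hKC hxK).resolve_left fun hxC => Set.disjoint_left.1 hC.2.1 hxC hxS

lemma IsCompOutside.mem_of_adj (hC : IsCompOutside G S C) (hCK : nbhdSet G C ⊆ K) {x y : V}
    (hx : x ∈ C) (hy : y ∈ K ∪ S) (hxy : G.Adj x y) : y ∈ K :=
  hy.elim id fun hyS => hCK ⟨fun hyC => Set.disjoint_left.1 hC.2.1 hyC hyS, x, hx, hxy⟩

end Components

lemma DirectedOn.exists_mem_subset_of_finite_of_subset_biUnion {ι α : Type*} {f : ι → Set α}
    {c : Set ι} (hn : c.Nonempty) (hc : DirectedOn (fun i j => f i ⊆ f j) c) {s : Set α}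
    (hs : s.Finite) (hsc : s ⊆ ⋃ i ∈ c, f i) : ∃ i ∈ c, s ⊆ f i := by
  simpa using
    hc.exists_mem_subset_of_finset_subset_biUnion hn (s := hs.toFinset) (by simpa using hsc)

lemma Set.exists_eqOn_of_eqOn_inter {ι α β : Type*} [Nonempty β] {c : Set ι} (S : ι → Set α)
    (f : ι → α → β) (h : ∀ i ∈ c, ∀ j ∈ c, Set.EqOn (f i) (f j) (S i ∩ S j)) :
    ∃ F : α → β, ∀ i ∈ c, Set.EqOn F (f i) (S i) := by
  classical
  refine ⟨fun a => if ha : ∃ i ∈ c, a ∈ S i then f ha.choose a else Classical.arbitrary β,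
    fun i hi a ha => ?_⟩
  have hex : ∃ i ∈ c, a ∈ S i := ⟨i, hi, ha⟩
  simp only [dif_pos hex]
  exact h _ hex.choose_spec.1 i hi ⟨hex.choose_spec.2, ha⟩

/-- A rooted tree of maximal cliques: `parent` points towards the root bag `r`, and `depth`
witnesses that it gets there. A bag `K ∋ w` is a top bag for `w` if `K = r` or `w ∉ parent K`;
uniqueness of top bags makes the bags containing `w` a subtree. -/
structure PartialDecomp (G : SimpleGraph V) (r : Set V) where
  bags : Set (Set V)
  parent : Set V → Set V
  depth : Set V → ℕ
  root_mem : r ∈ bags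
  parent_root : parent r = r
  parent_mem : ∀ K ∈ bags, parent K ∈ bags
  depth_parent_lt : ∀ K ∈ bags, K ≠ r → depth (parent K) < depth K
  maximal : ∀ K ∈ bags, Maximal G.IsClique K
  eq_of_top : ∀ K ∈ bags, ∀ L ∈ bags, ∀ w ∈ K, w ∈ L →
    (K = r ∨ w ∉ parent K) → (L = r ∨ w ∉ parent L) → K = L
  exists_mem_of_adj : ∀ x ∈ ⋃₀ bags, ∀ y ∈ ⋃₀ bags, G.Adj x y → ∃ K ∈ bags, x ∈ K ∧ y ∈ K
  exists_nbhdSet_subset : ∀ W, (G.induce W).Connected → Disjoint W (⋃₀ bags) →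
    ∃ K ∈ bags, nbhdSet G W ∩ ⋃₀ bags ⊆ K

namespace PartialDecomp

variable {r : Set V}

instance : Preorder (PartialDecomp G r) where
  le p q := p.bags ⊆ q.bags ∧ ∀ K ∈ p.bags, q.parent K = p.parent K ∧ q.depth K = p.depth K
  le_refl _ := ⟨subset_rfl, fun _ _ => ⟨rfl, rfl⟩⟩
  le_trans _ _ _ hpq hqt := ⟨hpq.1.trans hqt.1, fun K hK =>
    ⟨(hqt.2 K (hpq.1 hK)).1.trans (hpq.2 K hK).1, (hqt.2 K (hpq.1 hK)).2.trans (hpq.2 K hK).2⟩⟩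

def single (hr : Maximal G.IsClique r) : PartialDecomp G r where
  bags := {r}
  parent _ := r
  depth _ := 0
  root_mem := rfl
  parent_root := rfl
  parent_mem _ _ := rfl
  depth_parent_lt _ hK hKr := absurd hK hKr
  maximal _ hK := hK ▸ hr
  eq_of_top _ hK _ hL _ _ _ _ _ := hK.trans hL.symm
  exists_mem_of_adj x hx y hy _ := ⟨r, rfl, by simpa using hx, by simpa using hy⟩
  exists_nbhdSet_subset _ _ _ := ⟨r, rfl, fun _ hx => by simpa using hx.2⟩

def parentMap (p : PartialDecomp G r) (K : p.bags) : p.bags := ⟨p.parent K, p.parent_mem K K.2⟩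

def tree (p : PartialDecomp G r) : SimpleGraph p.bags := parentGraph p.parentMap

theorem isTreeDecomp (p : PartialDecomp G r) (hcover : ∀ v, v ∈ ⋃₀ p.bags) :
    IsTreeDecomp G p.tree (fun K => (K : Set V)) := by
  have hd : ∀ K : p.bags, K ≠ ⟨r, p.root_mem⟩ → p.depth (p.parentMap K) < p.depth K :=
    fun K hK => p.depth_parent_lt K K.2 (hK <| Subtype.ext ·)
  refine ⟨isTree_of_depth_lt (π := p.parentMap) (r := ⟨r, p.root_mem⟩) (d := fun K => p.depth K)
    (Subtype.ext p.parent_root) hd,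
    fun v => ?_, fun u v huv => ?_, fun v => ?_⟩
  · obtain ⟨K, hK, hvK⟩ := hcover v
    exact ⟨⟨K, hK⟩, hvK⟩
  · obtain ⟨K, hK, hu, hv⟩ := p.exists_mem_of_adj u (hcover u) v (hcover v) huv
    exact ⟨⟨K, hK⟩, hu, hv⟩
  · obtain ⟨K, hK, hvK⟩ := hcover v
    refine induce_connected_of_depth_lt (π := p.parentMap) (d := fun K => p.depth K) hd
      ⟨⟨K, hK⟩, hvK⟩ fun s hs t ht hstop httop =>
        Subtype.ext <| p.eq_of_top s s.2 t t.2 v hs ht ?_ ?_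
    · exact hstop.imp (congrArg Subtype.val) id
    · exact httop.imp (congrArg Subtype.val) id

section Chains

variable {c : Set (PartialDecomp G r)}

lemma exists_mem_subset_sUnion_of_isChain (hc : IsChain (· ≤ ·) c) (hne : c.Nonempty)
    {s : Set V} (hs : s.Finite) (hsc : s ⊆ ⋃ p ∈ c, ⋃₀ p.bags) : ∃ p ∈ c, s ⊆ ⋃₀ p.bags :=
  (hc.directedOn.mono fun _ _ h => Set.sUnion_mono h.1)
    |>.exists_mem_subset_of_finite_of_subset_biUnion hne hs hsc

lemma exists_mem_subset_bags_of_isChain (hc : IsChain (· ≤ ·) c) (hne : c.Nonempty)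
    {s : Set (Set V)} (hs : s.Finite) (hsc : s ⊆ ⋃ p ∈ c, p.bags) : ∃ p ∈ c, s ⊆ p.bags :=
  (hc.directedOn.mono fun _ _ h => h.1).exists_mem_subset_of_finite_of_subset_biUnion hne hs hsc

lemma exists_nbhdSet_subset_of_isChain (hnoinf : ∀ s : Set V, G.IsClique s → s.Finite)
    (hc : IsChain (· ≤ ·) c) (hne : c.Nonempty) {W : Set V} (hW : (G.induce W).Connected)
    (hWc : ∀ p ∈ c, Disjoint W (⋃₀ p.bags)) :
    ∃ p ∈ c, ∃ K ∈ p.bags, nbhdSet G W ∩ ⋃ p ∈ c, ⋃₀ p.bags ⊆ K := by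
  have hN : G.IsClique (nbhdSet G W ∩ ⋃ p ∈ c, ⋃₀ p.bags) := by
    intro x hx y hy hxy
    obtain ⟨p, hp, hxyp⟩ := exists_mem_subset_sUnion_of_isChain hc hne (Set.toFinite {x, y})
      (Set.pair_subset hx.2 hy.2)
    obtain ⟨K, hK, hNK⟩ := p.exists_nbhdSet_subset W hW (hWc p hp)
    exact (p.maximal K hK).1 (hNK ⟨hx.1, hxyp (by simp)⟩) (hNK ⟨hy.1, hxyp (by simp)⟩) hxy
  obtain ⟨p, hp, hNp⟩ := exists_mem_subset_sUnion_of_isChain hc hne (hnoinf _ hN)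
    Set.inter_subset_right
  obtain ⟨K, hK, hNK⟩ := p.exists_nbhdSet_subset W hW (hWc p hp)
  exact ⟨p, hp, K, hK, fun x hx => hNK ⟨hx.1, hNp hx⟩⟩

variable (hnoinf : ∀ s : Set V, G.IsClique s → s.Finite) (hc : IsChain (· ≤ ·) c)
  {p₀ : PartialDecomp G r} (hp₀ : p₀ ∈ c) {par : Set V → Set V} {dep : Set V → ℕ}
  (hpar : ∀ p ∈ c, Set.EqOn par p.parent p.bags) (hdep : ∀ p ∈ c, Set.EqOn dep p.depth p.bags)

def ofChain : PartialDecomp G r :=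
  have hU : ⋃₀ (⋃ p ∈ c, p.bags) = ⋃ p ∈ c, ⋃₀ p.bags := by simp [Set.sUnion_iUnion]
  { bags := ⋃ p ∈ c, p.bags
    parent := par
    depth := dep
    root_mem := Set.mem_biUnion hp₀ p₀.root_mem
    parent_root := (hpar p₀ hp₀ p₀.root_mem).trans p₀.parent_root
    parent_mem := by
      simp only [Set.mem_iUnion₂]
      rintro K ⟨p, hp, hK⟩
      exact ⟨p, hp, hpar p hp hK ▸ p.parent_mem K hK⟩
    depth_parent_lt := by
      simp only [Set.mem_iUnion₂]
      rintro K ⟨p, hp, hK⟩ hKr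
      rw [hdep p hp hK, hpar p hp hK, hdep p hp (p.parent_mem K hK)]
      exact p.depth_parent_lt K hK hKr
    maximal := by
      simp only [Set.mem_iUnion₂]
      rintro K ⟨p, hp, hK⟩
      exact p.maximal K hK
    eq_of_top := by
      intro K hK L hL w hwK hwL hKtop hLtop
      obtain ⟨p, hp, hKL⟩ := exists_mem_subset_bags_of_isChain hc ⟨p₀, hp₀⟩
        (Set.toFinite {K, L}) (Set.pair_subset hK hL)
      have hKp : K ∈ p.bags := hKL (by simp)
      have hLp : L ∈ p.bags := hKL (by simp)
      rw [hpar p hp hKp] at hKtop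
      rw [hpar p hp hLp] at hLtop
      exact p.eq_of_top K hKp L hLp w hwK hwL hKtop hLtop
    exists_mem_of_adj := by
      rw [hU]
      intro x hx y hy hxy
      obtain ⟨p, hp, hxyp⟩ := exists_mem_subset_sUnion_of_isChain hc ⟨p₀, hp₀⟩
        (Set.toFinite {x, y}) (Set.pair_subset hx hy)
      obtain ⟨K, hK, hxK, hyK⟩ := p.exists_mem_of_adj x (hxyp (by simp)) y (hxyp (by simp)) hxy
      exact ⟨K, Set.mem_biUnion hp hK, hxK, hyK⟩
    exists_nbhdSet_subset := by
      rw [hU]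
      intro W hW hWU
      obtain ⟨p, hp, K, hK, hNK⟩ := exists_nbhdSet_subset_of_isChain hnoinf hc ⟨p₀, hp₀⟩ hW
        fun p hp => hWU.mono_right (Set.subset_biUnion_of_mem (u := fun p => ⋃₀ p.bags) hp)
      exact ⟨K, Set.mem_biUnion hp hK, hNK⟩ }

include hnoinf hc in
theorem bddAbove_of_isChain (hne : c.Nonempty) : BddAbove c := by
  obtain ⟨p₀, hp₀⟩ := hne
  obtain ⟨par, hpar⟩ := Set.exists_eqOn_of_eqOn_inter (c := c) bags parent fun p hp q hq K hK =>
    (hc.total hp hq).elim (fun h => ((h.2 K hK.1).1).symm) fun h => (h.2 K hK.2).1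
  obtain ⟨dep, hdep⟩ := Set.exists_eqOn_of_eqOn_inter (c := c) bags depth fun p hp q hq K hK =>
    (hc.total hp hq).elim (fun h => ((h.2 K hK.1).2).symm) fun h => (h.2 K hK.2).2
  exact ⟨ofChain hnoinf hc hp₀ hpar hdep, fun p hp =>
    ⟨Set.subset_biUnion_of_mem hp, fun K hK => ⟨hpar p hp hK, hdep p hp hK⟩⟩⟩

end Chains

variable {p : PartialDecomp G r} {C K L : Set V}

section AddLeaf

lemma notMem_bags_of_inter_nonempty (hC : IsCompOutside G (⋃₀ p.bags) C) (hKC : (K ∩ C).Nonempty) :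
    K ∉ p.bags := fun hKp =>
  hKC.elim fun _ ⟨hxK, hxC⟩ => Set.disjoint_left.1 hC.2.1 hxC ⟨K, hKp, hxK⟩

variable (hC : IsCompOutside G (⋃₀ p.bags) C) (hK : G.IsClique K) (hKC : (K ∩ C).Nonempty)
  (hCK : nbhdSet G C ⊆ K)
include hC hK hKC hCK

lemma exists_mem_of_adj_insert {x y : V} (hx : x ∈ K ∪ ⋃₀ p.bags) (hy : y ∈ K ∪ ⋃₀ p.bags)
    (hxy : G.Adj x y) : ∃ M ∈ insert K p.bags, x ∈ M ∧ y ∈ M := by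
  by_cases hxU : x ∈ ⋃₀ p.bags
  · by_cases hyU : y ∈ ⋃₀ p.bags
    · obtain ⟨M, hM, hxM, hyM⟩ := p.exists_mem_of_adj x hxU y hyU hxy
      exact ⟨M, Set.mem_insert_of_mem _ hM, hxM, hyM⟩
    · have hyC := hC.mem_of_isClique hK hKC (hy.resolve_right hyU) hyU
      exact ⟨K, Set.mem_insert _ _, hC.mem_of_adj hCK hyC hx hxy.symm,
        hy.resolve_right hyU⟩
  · have hxC := hC.mem_of_isClique hK hKC (hx.resolve_right hxU) hxU
    exact ⟨K, Set.mem_insert _ _, hx.resolve_right hxU, hC.mem_of_adj hCK hxC hy hxy⟩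

lemma exists_nbhdSet_subset_insert {W : Set V} (hW : (G.induce W).Connected)
    (hWU : Disjoint W (K ∪ ⋃₀ p.bags)) :
    ∃ M ∈ insert K p.bags, nbhdSet G W ∩ (K ∪ ⋃₀ p.bags) ⊆ M := by
  have hWU' : Disjoint W (⋃₀ p.bags) := hWU.mono_right Set.subset_union_right
  by_cases hWC : (W ∩ C).Nonempty
  · have hWC := hC.subset_of_connected hW hWU' hWC
    exact ⟨K, Set.mem_insert _ _, fun x ⟨⟨_, d, hd, hdx⟩, hx⟩ =>
      hC.mem_of_adj hCK (hWC hd) hx hdx⟩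
  · obtain ⟨M, hM, hWM⟩ := p.exists_nbhdSet_subset W hW hWU'
    refine ⟨M, Set.mem_insert_of_mem _ hM, fun x ⟨hxW, hx⟩ => hWM ⟨hxW, ?_⟩⟩
    obtain ⟨-, d, hd, hdx⟩ := hxW
    by_contra hxU
    have hxC := hC.mem_of_isClique hK hKC (hx.resolve_right hxU) hxU
    exact hWC ⟨d, hd, hC.2.2.2 x hxC d hdx.symm (Set.disjoint_left.1 hWU' hd)⟩

end AddLeaf

variable (p)

noncomputable def addLeaf (hC : IsCompOutside G (⋃₀ p.bags) C) (hK : Maximal G.IsClique K)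
    (hKC : (K ∩ C).Nonempty) (hCK : nbhdSet G C ⊆ K) (hL : L ∈ p.bags) (hCL : nbhdSet G C ⊆ L) :
    PartialDecomp G r :=
  have hKp := notMem_bags_of_inter_nonempty hC hKC
  have hne : ∀ {M}, M ∈ p.bags → M ≠ K := fun hM h => hKp (h ▸ hM)
  { bags := insert K p.bags
    parent := update p.parent K L
    depth := update p.depth K (p.depth L + 1)
    root_mem := Set.mem_insert_of_mem _ p.root_mem
    parent_root := by rw [update_of_ne (hne p.root_mem), p.parent_root]
    parent_mem := by
      rintro M (rfl | hM)
      · simpa using Set.mem_insert_of_mem _ hL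
      · simpa [hne hM] using Set.mem_insert_of_mem _ (p.parent_mem M hM)
    depth_parent_lt := by
      rintro M (rfl | hM) hMr
      · simp [hne hL]
      · simpa [hne hM, hne (p.parent_mem M hM)] using p.depth_parent_lt M hM hMr
    maximal := by
      rintro M (rfl | hM)
      exacts [hK, p.maximal M hM]
    eq_of_top := by
      have hKtop : ∀ M ∈ p.bags, ∀ w ∈ K, w ∈ M → K = r ∨ w ∉ update p.parent K L K → False :=
        fun M hM w hwK hwM h => h.elim (fun h => hne p.root_mem h.symm) fun h =>
          h (by simpa using hCL (hC.mem_nbhdSet_of_isClique hK.1 hKC hwK ⟨M, hM, hwM⟩))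
      rintro M (rfl | hM) N (rfl | hN) w hwM hwN hMtop hNtop
      · rfl
      · exact (hKtop N hN w hwM hwN hMtop).elim
      · exact (hKtop M hM w hwN hwM hNtop).elim
      · simp only [update_of_ne (hne hM), update_of_ne (hne hN)] at hMtop hNtop
        exact p.eq_of_top M hM N hN w hwM hwN hMtop hNtop
    exists_mem_of_adj := by
      simp only [Set.sUnion_insert]
      exact fun x hx y hy => exists_mem_of_adj_insert hC hK.1 hKC hCK hx hy
    exists_nbhdSet_subset := by
      simp only [Set.sUnion_insert]
      exact fun W hW => exists_nbhdSet_subset_insert hC hK.1 hKC hCK hW }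

theorem exists_gt_of_notMem (hG : IsChordal G) (hnoinf : ∀ s : Set V, G.IsClique s → s.Finite)
    {v : V} (hv : v ∉ ⋃₀ p.bags) : ∃ q, p < q := by
  obtain ⟨C, hvC, hC⟩ := exists_isCompOutside hv
  obtain ⟨L, hL, hCL⟩ := p.exists_nbhdSet_subset C hC.2.2.1 hC.2.1
  have hCL : nbhdSet G C ⊆ L := fun x hx => hCL ⟨hx, hC.nbhdSet_subset hx⟩
  have hN : G.IsClique (nbhdSet G C) := (p.maximal L hL).1.subset hCL
  obtain ⟨u, huC, hu⟩ := hG.exists_forall_adj_of_subset_nbhdSet hC.2.2.1 (hnoinf _ hN) hN subset_rfl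
  obtain ⟨K, huK, hK⟩ := exists_maximal_isClique_superset G (hN.insert fun x hx _ => hu x hx)
  have hKC : (K ∩ C).Nonempty := ⟨u, huK (Set.mem_insert _ _), huC⟩
  have hCK : nbhdSet G C ⊆ K := (Set.subset_insert _ _).trans huK
  refine ⟨p.addLeaf hC hK hKC hCK hL hCL, ⟨Set.subset_insert _ _, fun M hM => ?_⟩,
    fun h => notMem_bags_of_inter_nonempty hC hKC (h.1 (Set.mem_insert _ _))⟩
  have hMK : M ≠ K := fun h => notMem_bags_of_inter_nonempty hC hKC (h ▸ hM)
  exact ⟨update_of_ne hMK .., update_of_ne hMK ..⟩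

end PartialDecomp

theorem stmt3 {V : Type u} (G : SimpleGraph V) (hchordal : IsChordal G)
    (hnoinf : ∀ s : Set V, G.IsClique s → s.Finite) :
    ∃ (ι : Type u) (T : SimpleGraph ι) (bag : ι → Set V),
      IsTreeDecomp G T bag ∧ ∀ t, Maximal G.IsClique (bag t) := by
  obtain ⟨r, -, hr⟩ := exists_maximal_isClique_superset G G.isClique_empty
  have : Nonempty (PartialDecomp G r) := ⟨.single hr⟩
  obtain ⟨m, hm⟩ := zorn_le_nonempty (α := PartialDecomp G r) fun c hc hne =>
    PartialDecomp.bddAbove_of_isChain hnoinf hc hne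
  have hcover : ∀ v, v ∈ ⋃₀ m.bags := fun v => by_contra fun hv =>
    (m.exists_gt_of_notMem hchordal hnoinf hv).elim fun _ hq => hm.not_lt hq
  exact ⟨m.bags, m.tree, (↑), m.isTreeDecomp hcover, fun K => m.maximal K K.2⟩
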